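/- arXiv:math/0604020 — 4 statements merged into one kernel-verified Lean document; each statement's English description precedes it below -/
import Mathlib

section
/- Let V be a finite-dimensional vector space and N a nilpotent endomorphism of V with N^d = 0. Define the kernel filtration K_p V = ker(N^p) and the image filtration I^q V = im(N^q). Then the bigraded pieces gr_I^q gr^K_p V := (I^q ∩ K_{p+1} + K_p)/(I^{q+1} ∩ K_{p+1} + K_p) are nonzero only if p ≥ 0, q ≥ 0 and p + q < d, and for p ≥ 1 the map N induces an isomorphism gr_I^q gr^K_p V → gr_I^{q+1} gr^K_{p−1} V. -/
section aux

variable {F V : Type*} [Field F] [AddCommGroup V] [Module F V] (N : V →ₗ[F] V)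

private lemma pow_comp (a b : ℕ) (x : V) : (N ^ a) ((N ^ b) x) = (N ^ (a + b)) x := by
  rw [pow_add, Module.End.mul_apply]

private lemma comp_pow (a : ℕ) (x : V) : (N ^ a) (N x) = (N ^ (a + 1)) x := by
  rw [pow_succ, Module.End.mul_apply]

private lemma pow_comp' (a : ℕ) (x : V) : N ((N ^ a) x) = (N ^ (a + 1)) x := by
  rw [pow_succ', Module.End.mul_apply]

private lemma range_pow_mono {a b : ℕ} (h : a ≤ b) :
    LinearMap.range (N ^ b) ≤ LinearMap.range (N ^ a) := by
  obtain ⟨c, rfl⟩ := Nat.exists_eq_add_of_le h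
  rintro x ⟨z, rfl⟩
  exact ⟨(N ^ c) z, pow_comp N a c z⟩

private lemma lemA (p q : ℕ) (x : V)
    (hx : x ∈ (LinearMap.range (N ^ q) ⊓ LinearMap.ker (N ^ (p + 1 + 1)))
        ⊔ LinearMap.ker (N ^ (p + 1))) :
    N x ∈ (LinearMap.range (N ^ (q + 1)) ⊓ LinearMap.ker (N ^ (p + 1)))
        ⊔ LinearMap.ker (N ^ p) := by
  rw [Submodule.mem_sup] at hx ⊢
  obtain ⟨a, ha, b, hb, rfl⟩ := hx
  rw [Submodule.mem_inf] at ha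
  obtain ⟨⟨z, hz⟩, hak⟩ := ha
  rw [LinearMap.mem_ker] at hak hb
  refine ⟨N a, Submodule.mem_inf.mpr ⟨⟨z, ?_⟩, ?_⟩, N b, ?_, by rw [map_add]⟩
  · rw [← hz, pow_comp']
  · rw [LinearMap.mem_ker, comp_pow]
    exact hak
  · rw [LinearMap.mem_ker, comp_pow]
    exact hb

private lemma lemB (p q : ℕ) :
    Submodule.map N ((LinearMap.range (N ^ q) ⊓ LinearMap.ker (N ^ (p + 1 + 1)))
        ⊔ LinearMap.ker (N ^ (p + 1)))
      ⊔ ((LinearMap.range (N ^ (q + 2)) ⊓ LinearMap.ker (N ^ (p + 1)))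
        ⊔ LinearMap.ker (N ^ p))
    = (LinearMap.range (N ^ (q + 1)) ⊓ LinearMap.ker (N ^ (p + 1)))
        ⊔ LinearMap.ker (N ^ p) := by
  apply le_antisymm
  · apply sup_le
    · rintro _ ⟨x, hx, rfl⟩
      exact lemA N p q x hx
    · exact sup_le_sup (inf_le_inf_right _ (range_pow_mono N (by omega))) le_rfl
  · rintro y hy
    rw [Submodule.mem_sup] at hy
    obtain ⟨a, ha, b, hb, rfl⟩ := hy
    rw [Submodule.mem_inf] at ha
    obtain ⟨⟨z, hz⟩, hak⟩ := ha
    rw [LinearMap.mem_ker] at hak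
    have hx : (N ^ q) z ∈ (LinearMap.range (N ^ q) ⊓ LinearMap.ker (N ^ (p + 1 + 1)))
        ⊔ LinearMap.ker (N ^ (p + 1)) := by
      apply Submodule.mem_sup_left
      refine Submodule.mem_inf.mpr ⟨⟨z, rfl⟩, ?_⟩
      rw [LinearMap.mem_ker, pow_comp, show p + 1 + 1 + q = p + 1 + (q + 1) from by omega,
        ← pow_comp, hz, hak]
    have hNx : N ((N ^ q) z) = a := by rw [pow_comp', hz]
    refine Submodule.add_mem_sup ⟨(N ^ q) z, hx, hNx⟩ (Submodule.mem_sup_right hb)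

private lemma lemC (p q : ℕ) (x : V)
    (hx : x ∈ (LinearMap.range (N ^ q) ⊓ LinearMap.ker (N ^ (p + 1 + 1)))
        ⊔ LinearMap.ker (N ^ (p + 1)))
    (hNx : N x ∈ (LinearMap.range (N ^ (q + 2)) ⊓ LinearMap.ker (N ^ (p + 1)))
        ⊔ LinearMap.ker (N ^ p)) :
    x ∈ (LinearMap.range (N ^ (q + 1)) ⊓ LinearMap.ker (N ^ (p + 1 + 1)))
        ⊔ LinearMap.ker (N ^ (p + 1)) := by
  rw [Submodule.mem_sup] at hx
  obtain ⟨a, ha, b, hb, rfl⟩ := hx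
  rw [Submodule.mem_inf] at ha
  obtain ⟨⟨z, hz⟩, hak⟩ := ha
  rw [LinearMap.mem_ker] at hak
  have hbk : (N ^ (p + 1)) b = 0 := hb
  have hNb : N b ∈ (LinearMap.range (N ^ (q + 2)) ⊓ LinearMap.ker (N ^ (p + 1)))
      ⊔ LinearMap.ker (N ^ p) := by
    apply Submodule.mem_sup_right
    rw [LinearMap.mem_ker, comp_pow]
    exact hbk
  have hNa : N a ∈ (LinearMap.range (N ^ (q + 2)) ⊓ LinearMap.ker (N ^ (p + 1)))
      ⊔ LinearMap.ker (N ^ p) := by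
    have h : N a = N (a + b) - N b := by rw [map_add]; abel
    rw [h]
    exact Submodule.sub_mem _ hNx hNb
  rw [Submodule.mem_sup] at hNa
  obtain ⟨c, hc, e, he, hce⟩ := hNa
  rw [Submodule.mem_inf] at hc
  obtain ⟨⟨w, hw⟩, hck⟩ := hc
  rw [LinearMap.mem_ker] at hck he
  have key1 : (N ^ (p + 1 + 1)) ((N ^ (q + 1)) w) = 0 := by
    rw [pow_comp, show p + 1 + 1 + (q + 1) = p + 1 + (q + 2) from by omega, ← pow_comp, hw, hck]
  have key2 : N (a - (N ^ (q + 1)) w) = e := by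
    rw [map_sub, pow_comp', show q + 1 + 1 = q + 2 from rfl, hw, ← hce]
    abel
  have key3 : (N ^ (p + 1)) (a - (N ^ (q + 1)) w) = 0 := by
    rw [← comp_pow, key2, he]
  have hsplit : a + b = (N ^ (q + 1)) w + ((a - (N ^ (q + 1)) w) + b) := by abel
  rw [hsplit]
  refine Submodule.add_mem_sup (Submodule.mem_inf.mpr ⟨⟨w, rfl⟩, key1⟩) ?_
  exact Submodule.add_mem _ key3 hbk

end aux

/-- Kernel/image bifiltration of a nilpotent endomorphism `N` with `N^d = 0` on a vector
space `V`: with `K_p = ker N^p`, `I^q = im N^q`, and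
`S p q = (I^q ⊓ K_{p+1}) ⊔ K_p` (so that the bigraded piece `gr_I^q gr^K_p V` is
`S p q / S p (q+1)`), the bigraded pieces vanish for `p + q ≥ d`, and for `p ≥ 1` the map
`N` induces an isomorphism `gr_I^q gr^K_p V → gr_I^{q+1} gr^K_{p-1} V` (expressed
quotient-free: `N` maps `S p q` into `S (p-1) (q+1)`, is surjective onto it modulo
`S (p-1) (q+2)`, and an element of `S p q` whose image lies in `S (p-1) (q+2)` already
lies in `S p (q+1)`). -/
theorem stmt3 {F V : Type*} [Field F] [AddCommGroup V] [Module F V]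
    (d : ℕ) (N : V →ₗ[F] V) (hN : N ^ d = 0) :
    ∀ S : ℕ → ℕ → Submodule F V,
    (S = fun p q => (LinearMap.range (N ^ q) ⊓ LinearMap.ker (N ^ (p + 1)))
        ⊔ LinearMap.ker (N ^ p)) →
    (∀ p q : ℕ, d ≤ p + q → S p q = S p (q + 1)) ∧
    (∀ p q : ℕ, 1 ≤ p →
      (∀ x ∈ S p q, N x ∈ S (p - 1) (q + 1)) ∧
      (Submodule.map N (S p q) ⊔ S (p - 1) (q + 2) = S (p - 1) (q + 1)) ∧
      (∀ x ∈ S p q, N x ∈ S (p - 1) (q + 2) → x ∈ S p (q + 1))) := by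
  intro S hS
  subst hS
  constructor
  · intro p q hpq
    simp only []
    apply le_antisymm
    · apply sup_le
      · intro x hx
        rw [Submodule.mem_inf] at hx
        obtain ⟨⟨z, rfl⟩, -⟩ := hx
        apply Submodule.mem_sup_right
        rw [LinearMap.mem_ker, pow_comp, show p + q = p + q - d + d from by omega,
          pow_add, hN, mul_zero, LinearMap.zero_apply]
      · exact le_sup_right
    · exact sup_le_sup (inf_le_inf_right _ (range_pow_mono N (Nat.le_succ q))) le_rfl
  · intro p q hp
    obtain ⟨p, rfl⟩ : ∃ p', p = p' + 1 := ⟨p - 1, by omega⟩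
    simp only [Nat.add_sub_cancel]
    exact ⟨fun x hx => lemA N p q x hx, lemB N p q, fun x hx h => lemC N p q x hx h⟩
end

section
/- With notation as in the kernel/image bifiltration of a nilpotent endomorphism N on V: the bigraded piece gr_I^q gr^K_0 V is isomorphic to the kernel of the map gr^M_{−q} V → gr^M_{−q−2} V induced by N on the monodromy filtration, and for all p, q ≥ 0 the map N^p induces an isomorphism gr_I^q gr^K_p V → gr_I^{q+p} gr^K_0 V. -/
/-- For a nilpotent endomorphism `N` of a finite-dimensional vector space `V` over a field
of characteristic `0`, with kernel filtration `K_p = ker N^p`, image filtration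
`I^q = im N^q`, bifiltration `S p q = (I^q ⊓ K_{p+1}) ⊔ K_p` (so `gr_I^q gr^K_p V =
S p q / S p (q+1)`), and monodromy filtration `M` (characterized by monotonicity,
finiteness, `N (M i) ⊆ M (i-2)` and `N^i : gr^M_i ≅ gr^M_{-i}`):
(1) `gr_I^q gr^K_0 V` is isomorphic to the kernel of the map `gr^M_{-q} → gr^M_{-q-2}`
induced by `N`, which is `(M (-q) ⊓ N⁻¹(M (-q-3))) / M (-q-1)`; and
(2) for all `p, q ≥ 0`, `N^p` induces an isomorphism
`gr_I^q gr^K_p V → gr_I^{q+p} gr^K_0 V` (expressed quotient-free). -/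
theorem stmt4 {F V : Type*} [Field F] [CharZero F] [AddCommGroup V] [Module F V]
    [FiniteDimensional F V] (N : V →ₗ[F] V) (hN : IsNilpotent N)
    (M : ℤ → Submodule F V)
    (hmono : Monotone M) (hbot : ∃ a : ℤ, M a = ⊥) (htop : ∃ b : ℤ, M b = ⊤)
    (hshift : ∀ i : ℤ, Submodule.map N (M i) ≤ M (i - 2))
    (hiso : ∀ i : ℕ, ∀ h : M ((i : ℤ) - 1) ≤ (M (-(i : ℤ) - 1)).comap (N ^ i),
      Submodule.map (Submodule.mapQ (M ((i : ℤ) - 1)) (M (-(i : ℤ) - 1)) (N ^ i) h)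
          ((M (i : ℤ)).map (M ((i : ℤ) - 1)).mkQ)
        = (M (-(i : ℤ))).map (M (-(i : ℤ) - 1)).mkQ ∧
      ∀ x ∈ (M (i : ℤ)).map (M ((i : ℤ) - 1)).mkQ,
        Submodule.mapQ (M ((i : ℤ) - 1)) (M (-(i : ℤ) - 1)) (N ^ i) h x = 0 → x = 0) :
    ∀ S : ℕ → ℕ → Submodule F V,
    (S = fun p q => (LinearMap.range (N ^ q) ⊓ LinearMap.ker (N ^ (p + 1)))
        ⊔ LinearMap.ker (N ^ p)) →
    (∀ q : ℕ,
      Nonempty ((↥(S 0 q) ⧸ (S 0 (q + 1)).comap (S 0 q).subtype) ≃ₗ[F]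
        (↥(M (-(q : ℤ)) ⊓ Submodule.comap N (M (-(q : ℤ) - 3))) ⧸
          (M (-(q : ℤ) - 1)).comap
            (M (-(q : ℤ)) ⊓ Submodule.comap N (M (-(q : ℤ) - 3))).subtype))) ∧
    (∀ p q : ℕ,
      (∀ x ∈ S p q, (N ^ p) x ∈ S 0 (q + p)) ∧
      (Submodule.map (N ^ p) (S p q) ⊔ S 0 (q + p + 1) = S 0 (q + p)) ∧
      (∀ x ∈ S p q, (N ^ p) x ∈ S 0 (q + p + 1) → x ∈ S p (q + 1))) := by
  -- composition of powers, applied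
  have hpowapp : ∀ (a b : ℕ) (v : V), (N ^ a) ((N ^ b) v) = (N ^ (a + b)) v := by
    intro a b v
    rw [← Module.End.mul_apply, ← pow_add]
  have hNc : ∀ (a b : ℕ) (v : V), a = b → (N ^ a) v = (N ^ b) v := by
    intro a b v h; rw [h]
  have hps : ∀ (k : ℕ) (w : V), (N ^ (k + 1)) w = N ((N ^ k) w) := by
    intro k w
    rw [pow_succ', Module.End.mul_apply]
  -- iterated shift
  have hpow : ∀ (j : ℕ) (k : ℤ), ∀ x ∈ M k, (N ^ j) x ∈ M (k - 2 * j) := by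
    intro j
    induction j with
    | zero => intro k x hx; simpa using hx
    | succ j ih =>
      intro k x hx
      have h1 : (N ^ (j + 1)) x = N ((N ^ j) x) := by
        rw [pow_succ']; rfl
      rw [h1]
      have h2 := hshift (k - 2 * j) ⟨(N ^ j) x, ih k x hx, rfl⟩
      have : k - 2 * (j : ℤ) - 2 = k - 2 * ((j : ℕ) + 1 : ℕ) := by push_cast; ring
      rwa [this] at h2
  have hcomap : ∀ i : ℕ, M ((i : ℤ) - 1) ≤ (M (-(i : ℤ) - 1)).comap (N ^ i) := by
    intro i x hx
    have h1 := hpow i ((i : ℤ) - 1) x hx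
    exact Submodule.mem_comap.mpr
      (hmono (by omega : (i : ℤ) - 1 - 2 * i ≤ -(i : ℤ) - 1) h1)
  -- injectivity of N^i on gr_i
  have hinj : ∀ i : ℕ, ∀ x ∈ M (i : ℤ), (N ^ i) x ∈ M (-(i : ℤ) - 1) → x ∈ M ((i : ℤ) - 1) := by
    intro i x hx hNx
    obtain ⟨-, hi⟩ := hiso i (hcomap i)
    have hmem : (M ((i : ℤ) - 1)).mkQ x ∈ (M (i : ℤ)).map (M ((i : ℤ) - 1)).mkQ :=
      ⟨x, hx, rfl⟩
    have h0 : Submodule.mapQ (M ((i : ℤ) - 1)) (M (-(i : ℤ) - 1)) (N ^ i) (hcomap i)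
        ((M ((i : ℤ) - 1)).mkQ x) = 0 := by
      rw [Submodule.mkQ_apply, Submodule.mapQ_apply, Submodule.Quotient.mk_eq_zero]
      exact hNx
    have := hi _ hmem h0
    rwa [Submodule.mkQ_apply, Submodule.Quotient.mk_eq_zero] at this
  -- surjectivity of N^i : gr_i → gr_{-i}
  have hsurj : ∀ i : ℕ, ∀ y ∈ M (-(i : ℤ)), ∃ x ∈ M (i : ℤ),
      y - (N ^ i) x ∈ M (-(i : ℤ) - 1) := by
    intro i y hy
    obtain ⟨hs, -⟩ := hiso i (hcomap i)
    have hmem : (M (-(i : ℤ) - 1)).mkQ y ∈ (M (-(i : ℤ))).map (M (-(i : ℤ) - 1)).mkQ :=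
      ⟨y, hy, rfl⟩
    rw [← hs] at hmem
    obtain ⟨z, hz, hzy⟩ := hmem
    obtain ⟨x, hx, rfl⟩ := hz
    refine ⟨x, hx, ?_⟩
    rw [Submodule.mkQ_apply, Submodule.mapQ_apply] at hzy
    rw [← Submodule.Quotient.eq]
    exact (hzy.symm : _)
  -- kernels lie low
  have hker : ∀ p : ℕ, ∀ x, (N ^ p) x = 0 → x ∈ M ((p : ℤ) - 1) := by
    intro p
    obtain ⟨b, hb⟩ := htop
    have key : ∀ s : ℕ, (p : ℤ) - 1 ≤ b - s → ∀ x, (N ^ p) x = 0 → x ∈ M (b - s) := by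
      intro s
      induction s with
      | zero =>
        intro _ x _
        have he : b - ((0 : ℕ) : ℤ) = b := by push_cast; ring
        rw [he, hb]; trivial
      | succ s ih =>
        intro hcond x hx
        have hps : (p : ℤ) ≤ b - s := by push_cast at hcond ⊢; omega
        have hxm : x ∈ M (b - s) := ih (by omega) x hx
        set i : ℕ := (b - s).toNat with hi
        have hiz : (i : ℤ) = b - s := Int.toNat_of_nonneg (by omega)
        have hxmi : x ∈ M (i : ℤ) := by rw [hiz]; exact hxm
        have hNix : (N ^ i) x = 0 := by
          have hip : p ≤ i := by omega
          have : (N ^ i) x = (N ^ (i - p)) ((N ^ p) x) := by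
            rw [hpowapp, Nat.sub_add_cancel hip]
          rw [this, hx, map_zero]
        have := hinj i x hxmi (by rw [hNix]; exact (M _).zero_mem)
        have he : (i : ℤ) - 1 = b - (s + 1 : ℕ) := by push_cast; omega
        rwa [he] at this
    intro x hx
    by_cases hpb : (p : ℤ) - 1 ≤ b
    · have := key (b - ((p : ℤ) - 1)).toNat (by omega) x hx
      have he : b - ((b - ((p : ℤ) - 1)).toNat : ℤ) = (p : ℤ) - 1 := by
        rw [Int.toNat_of_nonneg (by omega)]; ring
      rwa [he] at this
    · exact hmono (by omega : b ≤ (p : ℤ) - 1) (by rw [hb]; trivial)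
  -- im N^q ∩ ker N^p ⊆ M (p - q - 1)
  have hB : ∀ q p : ℕ, ∀ x, x ∈ LinearMap.range (N ^ q) → (N ^ p) x = 0 →
      x ∈ M ((p : ℤ) - q - 1) := by
    intro q
    induction q with
    | zero =>
      intro p x _ hx
      have := hker p x hx
      have he : (p : ℤ) - 1 = (p : ℤ) - (0 : ℕ) - 1 := by push_cast; ring
      rwa [he] at this
    | succ q ih =>
      intro p x hr hx
      obtain ⟨v, rfl⟩ := hr
      have h1 : (N ^ (q + 1)) v = N ((N ^ q) v) := by rw [pow_succ']; rfl
      have hw : (N ^ q) v ∈ M ((p : ℤ) + 1 - q - 1) := by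
        have hk : (N ^ (p + 1)) ((N ^ q) v) = 0 := by
          have : (N ^ (p + 1)) ((N ^ q) v) = (N ^ p) (N ((N ^ q) v)) := by
            rw [hpowapp, ← Module.End.mul_apply, ← pow_succ, hpowapp, pow_add,
              Module.End.mul_apply]
          rw [this, ← h1, hx]
        have := ih (p + 1) ((N ^ q) v) ⟨v, rfl⟩ hk
        have he : ((p + 1 : ℕ) : ℤ) - q - 1 = (p : ℤ) + 1 - q - 1 := by push_cast; ring
        rwa [he] at this
      rw [h1]
      have := hshift ((p : ℤ) + 1 - q - 1) ⟨(N ^ q) v, hw, rfl⟩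
      have he : (p : ℤ) + 1 - q - 1 - 2 = (p : ℤ) - (q + 1 : ℕ) - 1 := by push_cast; ring
      rwa [he] at this
  -- descending span lemma
  have hL : ∀ (m : ℕ) (T : Submodule F V),
      (∀ j : ℕ, m ≤ j → Submodule.map (N ^ j) (M (j : ℤ)) ≤ T) → M (-(m : ℤ)) ≤ T := by
    intro m T hT
    obtain ⟨a, ha⟩ := hbot
    have key : ∀ t : ℕ, a + t ≤ -(m : ℤ) → M (a + t) ≤ T := by
      intro t
      induction t with
      | zero => intro _; simpa [ha] using bot_le
      | succ t ih =>
        intro hc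
        intro y hy
        set j : ℕ := (-(a + t + 1)).toNat with hj
        have hjz : (j : ℤ) = -(a + t + 1) := Int.toNat_of_nonneg (by push_cast at hc ⊢; omega)
        have hjm : m ≤ j := by omega
        have hym : y ∈ M (-(j : ℤ)) := by
          rw [hjz]
          have he : -(-(a + t + 1)) = a + (t + 1 : ℕ) := by push_cast; ring
          rw [he]; exact hy
        obtain ⟨x, hx, hd⟩ := hsurj j y hym
        have h1 : (N ^ j) x ∈ T := hT j hjm ⟨x, hx, rfl⟩
        have h2 : y - (N ^ j) x ∈ T := by
          apply ih (by push_cast at hc ⊢; omega)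
          have he : -(j : ℤ) - 1 = a + t := by rw [hjz]; ring
          rwa [he] at hd
        have := T.add_mem h2 h1
        simpa using this
    by_cases hma : a ≤ -(m : ℤ)
    · have := key (-(m : ℤ) - a).toNat (by rw [Int.toNat_of_nonneg (by omega)]; omega)
      have he : a + ((-(m : ℤ) - a).toNat : ℤ) = -(m : ℤ) := by
        rw [Int.toNat_of_nonneg (by omega)]; ring
      rwa [he] at this
    · exact le_trans (hmono (by omega : -(m : ℤ) ≤ a)) (by rw [ha]; exact bot_le)
  -- M(-r) ⊆ im N^r
  have hD1 : ∀ r : ℕ, M (-(r : ℤ)) ≤ LinearMap.range (N ^ r) := by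
    intro r
    apply hL r
    intro j hj
    rintro x ⟨y, -, rfl⟩
    exact ⟨(N ^ (j - r)) y, by rw [hpowapp, Nat.add_sub_cancel' hj]⟩
  -- M(-q-3) ⊆ N^{q+1}( (N^q)⁻¹ M(-q-1) )
  have hD2 : ∀ q : ℕ, ∀ z ∈ M (-(q : ℤ) - 3), ∃ u, (N ^ q) u ∈ M (-(q : ℤ) - 1) ∧
      (N ^ (q + 1)) u = z := by
    intro q
    have hle : M (-(q : ℤ) - 3) ≤ Submodule.map (N ^ (q + 1))
        (Submodule.comap (N ^ q) (M (-(q : ℤ) - 1))) := by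
      have he : -(q : ℤ) - 3 = -((q + 3 : ℕ) : ℤ) := by push_cast; ring
      rw [he]
      apply hL (q + 3)
      intro j hj
      rintro x ⟨y, hy, rfl⟩
      refine ⟨(N ^ (j - (q + 1))) y, ?_, ?_⟩
      · have h1 : (N ^ q) ((N ^ (j - (q + 1))) y) = (N ^ (j - 1)) y := by
          rw [hpowapp]; exact hNc _ _ y (by omega)
        have h2 := hpow (j - 1) (j : ℤ) y hy
        have h3 : (j : ℤ) - 2 * ((j - 1 : ℕ) : ℤ) ≤ -(q : ℤ) - 1 := by omega
        exact Submodule.mem_comap.mpr (by rw [h1]; exact hmono h3 h2)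
      · rw [hpowapp]; exact hNc _ _ y (by omega)
    intro z hz
    obtain ⟨u, hu, hu2⟩ := hle hz
    exact ⟨u, hu, hu2⟩
  intro S hS
  have hS0 : ∀ r : ℕ, S 0 r = LinearMap.range (N ^ r) ⊓ LinearMap.ker N := by
    intro r
    rw [hS]
    simp [pow_one, Module.End.one_eq_id, LinearMap.ker_id]
  have hS0mem : ∀ (r : ℕ) (v : V),
      v ∈ S 0 r ↔ v ∈ LinearMap.range (N ^ r) ∧ N v = 0 := by
    intro r v
    rw [hS0 r]
    exact ⟨fun h => ⟨h.1, h.2⟩, fun h => ⟨h.1, h.2⟩⟩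
  constructor
  · -- part (1)
    intro q
    set W2 : Submodule F V := M (-(q : ℤ)) ⊓ Submodule.comap N (M (-(q : ℤ) - 3)) with hW2
    have hsub : S 0 q ≤ W2 := by
      intro x hx
      obtain ⟨hx1, hx2⟩ := (hS0mem q x).mp hx
      constructor
      · have : (N ^ 1) x = 0 := by rw [pow_one]; exact hx2
        have := hB q 1 x hx1 this
        have he : ((1 : ℕ) : ℤ) - q - 1 = -(q : ℤ) := by push_cast; ring
        rwa [he] at this
      · exact Submodule.mem_comap.mpr (by rw [hx2]; exact (M _).zero_mem)
    set K2 : Submodule F ↥W2 := (M (-(q : ℤ) - 1)).comap W2.subtype with hK2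
    set g : ↥(S 0 q) →ₗ[F] ↥W2 ⧸ K2 := K2.mkQ ∘ₗ Submodule.inclusion hsub with hg
    have hmemM : ∀ x : ↥(S 0 q), g x = 0 ↔ (x : V) ∈ M (-(q : ℤ) - 1) := by
      intro x
      rw [hg]
      simp only [LinearMap.comp_apply, Submodule.mkQ_apply, Submodule.Quotient.mk_eq_zero]
      rfl
    have hkerg : LinearMap.ker g = (S 0 (q + 1)).comap (S 0 q).subtype := by
      ext x
      simp only [LinearMap.mem_ker, Submodule.mem_comap, Submodule.coe_subtype]
      constructor
      · intro hg0
        have hxm := (hmemM x).mp hg0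
        obtain ⟨hx1, hx2⟩ := (hS0mem q (x : V)).mp x.2
        refine (hS0mem (q + 1) (x : V)).mpr ⟨?_, hx2⟩
        have hr := hD1 (q + 1)
        have he : -((q + 1 : ℕ) : ℤ) = -(q : ℤ) - 1 := by push_cast; ring
        rw [he] at hr
        exact hr hxm
      · intro hx
        apply (hmemM x).mpr
        obtain ⟨hx1, hx2⟩ := (hS0mem (q + 1) (x : V)).mp hx
        have h1 : (N ^ 1) (x : V) = 0 := by rw [pow_one]; exact hx2
        have hxm := hB (q + 1) 1 (x : V) hx1 h1
        have he : ((1 : ℕ) : ℤ) - (q + 1 : ℕ) - 1 = -(q : ℤ) - 1 := by push_cast; ring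
        rwa [he] at hxm
    have hsurg : Function.Surjective g := by
      intro c
      obtain ⟨w, rfl⟩ := K2.mkQ_surjective c
      have hw1 : (w : V) ∈ M (-(q : ℤ)) := w.2.1
      have hw2 : N (w : V) ∈ M (-(q : ℤ) - 3) := w.2.2
      obtain ⟨y, hy, hy2⟩ := hsurj q (w : V) hw1
      have hz : (N ^ (q + 1)) y ∈ M (-(q : ℤ) - 3) := by
        have h1 : (N ^ (q + 1)) y = N (w : V) - N ((w : V) - (N ^ q) y) := by
          rw [map_sub, pow_succ']
          simp [Module.End.mul_apply]
        rw [h1]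
        apply (M _).sub_mem hw2
        have := hshift (-(q : ℤ) - 1) ⟨(w : V) - (N ^ q) y, hy2, rfl⟩
        have he : -(q : ℤ) - 1 - 2 = -(q : ℤ) - 3 := by ring
        rwa [he] at this
      obtain ⟨u, hu1, hu2⟩ := hD2 q _ hz
      set x : V := (N ^ q) (y - u) with hx
      have hxk : N x = 0 := by
        rw [hx, ← hps q (y - u), map_sub, hu2, sub_self]
      have hxS : x ∈ S 0 q := (hS0mem q x).mpr ⟨⟨y - u, rfl⟩, hxk⟩
      refine ⟨⟨x, hxS⟩, ?_⟩
      rw [hg]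
      simp only [LinearMap.comp_apply, Submodule.mkQ_apply]
      rw [Submodule.Quotient.eq]
      show (Submodule.inclusion hsub ⟨x, hxS⟩ : ↥W2) - w ∈ K2
      rw [hK2, Submodule.mem_comap]
      have : (W2.subtype) (Submodule.inclusion hsub ⟨x, hxS⟩ - w) = x - (w : V) := rfl
      rw [this]
      have hd : x - (w : V) = -((w : V) - (N ^ q) y) + -((N ^ q) u) := by
        rw [hx, map_sub]
        abel
      rw [hd]
      exact (M _).add_mem ((M _).neg_mem hy2) ((M _).neg_mem hu1)
    exact ⟨(Submodule.quotEquivOfEq _ _ hkerg.symm).trans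
      (g.quotKerEquivOfSurjective hsurg)⟩
  · -- part (2)
    intro p q
    have hmemS : ∀ (p' q' : ℕ) (x : V), x ∈ S p' q' ↔
        ∃ y ∈ LinearMap.range (N ^ q') ⊓ LinearMap.ker (N ^ (p' + 1)),
        ∃ z ∈ LinearMap.ker (N ^ p'), y + z = x := by
      intro p' q' x
      rw [hS]
      exact Submodule.mem_sup
    have h2a : ∀ x ∈ S p q, (N ^ p) x ∈ S 0 (q + p) := by
      intro x hx
      rw [hmemS] at hx
      obtain ⟨y, hyr, z, hz, rfl⟩ := hx
      obtain ⟨hy1, hy2⟩ := hyr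
      obtain ⟨v, rfl⟩ := hy1
      replace hy2 : (N ^ (p + 1)) ((N ^ q) v) = 0 := hy2
      replace hz : (N ^ p) z = 0 := hz
      have hxv : (N ^ p) ((N ^ q) v + z) = (N ^ (p + q)) v := by
        rw [map_add, hz, add_zero, hpowapp]
      rw [hxv]
      refine (hS0mem (q + p) _).mpr ⟨⟨v, hNc _ _ v (by omega)⟩, ?_⟩
      rw [← hps (p + q) v, hNc (p + q + 1) (p + 1 + q) v (by omega), ← hpowapp]
      exact hy2
    refine ⟨h2a, ?_, ?_⟩
    · -- (2b)
      apply le_antisymm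
      · apply sup_le
        · rintro x ⟨y, hy, rfl⟩
          exact h2a y hy
        · rw [hS0, hS0]
          apply inf_le_inf_right
          rintro x ⟨v, rfl⟩
          exact ⟨N v, by rw [← Module.End.mul_apply, ← pow_succ]⟩
      · intro x hx
        replace hx : x ∈ S 0 (q + p) := hx
        obtain ⟨hx1, hxk⟩ := (hS0mem (q + p) x).mp hx
        obtain ⟨v, rfl⟩ := hx1
        apply Submodule.mem_sup_left
        have hk1 : (N ^ (p + 1)) ((N ^ q) v) = 0 := by
          rw [hpowapp, hNc (p + 1 + q) (q + p + 1) v (by omega), hps (q + p) v, hxk]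
        refine ⟨(N ^ q) v, ?_, ?_⟩
        · show (N ^ q) v ∈ S p q
          rw [hmemS]
          exact ⟨(N ^ q) v, Submodule.mem_inf.mpr ⟨⟨v, rfl⟩, LinearMap.mem_ker.mpr hk1⟩,
            0, (LinearMap.ker _).zero_mem, add_zero _⟩
        · rw [hpowapp]
          exact hNc _ _ v (by omega)
    · -- (2c)
      intro x hx hNx
      rw [hmemS] at hx
      obtain ⟨y, hyr, z, hz, rfl⟩ := hx
      obtain ⟨hy1, hy2⟩ := hyr
      obtain ⟨v, rfl⟩ := hy1
      replace hy2 : (N ^ (p + 1)) ((N ^ q) v) = 0 := hy2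
      replace hz : (N ^ p) z = 0 := hz
      rw [hS0 (q + p + 1)] at hNx
      obtain ⟨hNx1, -⟩ := hNx
      obtain ⟨u, hu⟩ := hNx1
      rw [map_add, hz, add_zero] at hu
      -- hu : (N ^ (q + p + 1)) u = (N ^ p) ((N ^ q) v)
      have hAk : (N ^ (p + 1)) ((N ^ (q + 1)) u) = 0 := by
        rw [hpowapp (p + 1) (q + 1) u, hNc (p + 1 + (q + 1)) (q + p + 1 + 1) u (by omega),
          hps (q + p + 1) u, hu, hpowapp p q v, ← hps (p + q) v,
          hNc (p + q + 1) (p + 1 + q) v (by omega), ← hpowapp (p + 1) q v, hy2]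
      have hBk : (N ^ p) ((N ^ q) v - (N ^ (q + 1)) u) = 0 := by
        rw [map_sub, hpowapp p (q + 1) u, hNc (p + (q + 1)) (q + p + 1) u (by omega), hu,
          hpowapp p q v, sub_self]
      rw [hmemS]
      refine ⟨(N ^ (q + 1)) u,
        Submodule.mem_inf.mpr ⟨⟨u, rfl⟩, LinearMap.mem_ker.mpr hAk⟩,
        ((N ^ q) v - (N ^ (q + 1)) u) + z, LinearMap.mem_ker.mpr ?_, by abel⟩
      rw [map_add, hBk, hz, add_zero]
end

section
/- Let G be a group, χ : G → ℤ a group homomorphism, A an associative unital algebra over a field of characteristic 0, q an element of the base field, γ : G → A^× a group homomorphism, and N ∈ A a nilpotent element satisfying γ(w) N γ(w)^{−1} = q^{−χ(w)} N for all w ∈ G. Fix φ ∈ G with χ(φ) = 1 and a homomorphism t : ker(χ) → (base field, +) satisfying t(w i w^{−1}) = q^{−χ(w)} t(i) for all w ∈ G, i ∈ ker(χ). Then the map γ^φ(w) := γ(w) · exp(−N · t(i_φ(w))), where w = φ^{χ(w)} i_φ(w) with i_φ(w) ∈ ker(χ), is a group homomorphism G → A^×. -/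
/-- The truncated exponential series of an element `x` of an algebra over a field of
characteristic zero (agreeing with `exp x` whenever `x ^ d = 0`). -/
noncomputable def expSum (F : Type*) [Field F] {A : Type*} [Ring A] [Algebra F A]
    (d : ℕ) (x : A) : A :=
  ∑ k ∈ Finset.range d, ((Nat.factorial k : F))⁻¹ • x ^ k

section Aux

variable {F : Type*} [Field F] [CharZero F] {A : Type*} [Ring A] [Algebra F A]

lemma expSum_smul_eq (d : ℕ) (c : F) (N : A) :
    expSum F d (c • N) = ∑ k ∈ Finset.range d, ((Nat.factorial k : F)⁻¹ * c ^ k) • N ^ k := by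
  unfold expSum
  refine Finset.sum_congr rfl fun k _ => ?_
  rw [smul_pow, smul_smul]

lemma factorial_coeff (j m : ℕ) (h : j ≤ m) :
    ((Nat.factorial j : F)⁻¹ * (Nat.factorial (m - j) : F)⁻¹)
      = (Nat.factorial m : F)⁻¹ * (m.choose j : F) := by
  have h1 : (Nat.factorial j : F) ≠ 0 := Nat.cast_ne_zero.2 j.factorial_ne_zero
  have h2 : (Nat.factorial (m - j) : F) ≠ 0 := Nat.cast_ne_zero.2 (m - j).factorial_ne_zero
  have h3 : (Nat.factorial m : F) ≠ 0 := Nat.cast_ne_zero.2 m.factorial_ne_zero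
  field_simp
  norm_cast
  rw [← Nat.choose_mul_factorial_mul_factorial h]
  ring

lemma expSum_smul_mul (d : ℕ) (N : A) (hNd : N ^ d = 0) (a b : F) :
    expSum F d (a • N) * expSum F d (b • N) = expSum F d ((a + b) • N) := by
  have hN : ∀ m, d ≤ m → N ^ m = 0 := by
    intro m hm
    rw [← Nat.sub_add_cancel hm, pow_add, hNd, mul_zero]
  rw [expSum_smul_eq, expSum_smul_eq, expSum_smul_eq, Finset.sum_mul_sum]
  have key : ∀ j k : ℕ,
      (((Nat.factorial j : F)⁻¹ * a ^ j) • N ^ j) * (((Nat.factorial k : F)⁻¹ * b ^ k) • N ^ k)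
        = (((Nat.factorial j : F)⁻¹ * a ^ j) * ((Nat.factorial k : F)⁻¹ * b ^ k)) • N ^ (j + k) := by
    intro j k
    rw [smul_mul_assoc, mul_smul_comm, smul_smul, pow_add]
  simp only [key]
  set C : ℕ → ℕ → A := fun j k =>
    (((Nat.factorial j : F)⁻¹ * a ^ j) * ((Nat.factorial k : F)⁻¹ * b ^ k)) • N ^ (j + k) with hC
  calc ∑ j ∈ Finset.range d, ∑ k ∈ Finset.range d, C j k
      = ∑ j ∈ Finset.range d, ∑ k ∈ Finset.range (d - j), C j k := by
        refine Finset.sum_congr rfl fun j hj => (Finset.sum_subset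
          (Finset.range_subset_range.2 (Nat.sub_le d j)) ?_).symm
        intro k hk hk2
        have hj' := Finset.mem_range.1 hj
        simp only [Finset.mem_range, not_lt] at hk hk2
        rw [hC]
        simp only [hN (j + k) (by omega), smul_zero]
    _ = ∑ j ∈ Finset.Ico 0 d, ∑ m ∈ Finset.Ico j d, C j (m - j) := by
        rw [← Finset.range_eq_Ico]
        refine Finset.sum_congr rfl fun j hj => ?_
        rw [Finset.sum_Ico_eq_sum_range]
        refine Finset.sum_congr rfl fun k hk => ?_
        simp [Nat.add_sub_cancel_left]
    _ = ∑ m ∈ Finset.Ico 0 d, ∑ j ∈ Finset.Ico 0 (m + 1), C j (m - j) :=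
        Finset.sum_Ico_Ico_comm 0 d _
    _ = ∑ m ∈ Finset.range d, ((Nat.factorial m : F)⁻¹ * (a + b) ^ m) • N ^ m := by
        rw [← Finset.range_eq_Ico]
        refine Finset.sum_congr rfl fun m hm => ?_
        rw [add_pow, Finset.mul_sum, Finset.sum_smul, Finset.range_eq_Ico]
        refine Finset.sum_congr rfl fun j hj => ?_
        simp only [Finset.mem_Ico] at hj
        have hjm : j ≤ m := by omega
        have : j + (m - j) = m := by omega
        rw [hC]
        simp only [this]
        congr 1
        rw [show ((Nat.factorial j : F)⁻¹ * a ^ j) * ((Nat.factorial (m - j) : F)⁻¹ * b ^ (m - j))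
            = ((Nat.factorial j : F)⁻¹ * (Nat.factorial (m - j) : F)⁻¹) * (a ^ j * b ^ (m - j))
            by ring, factorial_coeff j m hjm]
        ring

lemma expSum_zero_smul (d : ℕ) (hd : 0 < d) (N : A) : expSum F d ((0 : F) • N) = 1 := by
  rw [expSum_smul_eq]
  rw [Finset.sum_eq_single_of_mem 0 (Finset.mem_range.2 hd)]
  · simp
  · intro k _ hk
    simp [zero_pow hk]

lemma expSum_conj (d : ℕ) (u : Aˣ) (x : A) :
    (u : A) * expSum F d x * ((u⁻¹ : Aˣ) : A) = expSum F d ((u : A) * x * ((u⁻¹ : Aˣ) : A)) := by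
  unfold expSum
  rw [Finset.mul_sum, Finset.sum_mul]
  refine Finset.sum_congr rfl fun k _ => ?_
  rw [mul_smul_comm, smul_mul_assoc, Units.conj_pow]

end Aux

lemma chi_zpow {G : Type*} [Group G] (χ : G → ℤ) (hχ : ∀ a b : G, χ (a * b) = χ a + χ b)
    (a : G) (n : ℤ) : χ (a ^ n) = n * χ a := by
  have h1 : χ 1 = 0 := by have := hχ 1 1; simp only [one_mul] at this; omega
  let f : G →* Multiplicative ℤ :=
    { toFun := fun g => Multiplicative.ofAdd (χ g)
      map_one' := by simp [h1]
      map_mul' := fun a b => by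
        simp only [hχ]; exact ofAdd_add _ _ }
  have h := map_zpow f a n
  have h2 : Multiplicative.ofAdd (χ (a ^ n)) = Multiplicative.ofAdd (n * χ a) := by
    rw [show (n * χ a) = n • χ a by simp, ofAdd_zsmul]
    exact h
  exact Multiplicative.ofAdd.injective h2

lemma chi_inv {G : Type*} [Group G] (χ : G → ℤ) (hχ : ∀ a b : G, χ (a * b) = χ a + χ b)
    (a : G) : χ a⁻¹ = -χ a := by
  have h1 : χ 1 = 0 := by have := hχ 1 1; simp only [one_mul] at this; omega
  have := hχ a a⁻¹; simp only [mul_inv_cancel, h1] at this; omega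

/-- Let `G` be a group, `χ : G → ℤ` a homomorphism, `A` an algebra over a field of
characteristic `0`, `q` a nonzero element of the field, `γ : G → Aˣ` a homomorphism, and
`N ∈ A` nilpotent with `γ(w) N γ(w)⁻¹ = q^{−χ(w)} N`. Fix `φ` with `χ(φ) = 1` and
`t : ker χ → F` additive with `t(w i w⁻¹) = q^{−χ(w)} t(i)`. Then
`γ^φ(w) := γ(w) · exp(−N · t(i_φ(w)))`, where `i_φ(w) = φ^{−χ(w)} w`, is a group
homomorphism `G → Aˣ`. -/
theorem stmt5 {F : Type*} [Field F] [CharZero F] {A : Type*} [Ring A] [Algebra F A]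
    {G : Type*} [Group G] (χ : G → ℤ) (hχ : ∀ a b : G, χ (a * b) = χ a + χ b)
    (q : F) (hq : q ≠ 0) (γ : G →* Aˣ) (N : A) (d : ℕ) (hNd : N ^ d = 0)
    (hrel : ∀ w : G, (γ w : A) * N * (((γ w)⁻¹ : Aˣ) : A) = (q ^ (-(χ w)) : F) • N)
    (φ : G) (hφ : χ φ = 1) (t : G → F)
    (ht : ∀ i j : G, χ i = 0 → χ j = 0 → t (i * j) = t i + t j)
    (htconj : ∀ w i : G, χ i = 0 → t (w * i * w⁻¹) = q ^ (-(χ w)) * t i) :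
    ∀ γφ : G → A,
      (γφ = fun w => (γ w : A) * expSum F d ((-(t (φ ^ (-(χ w)) * w))) • N)) →
      (∀ w : G, IsUnit (γφ w)) ∧ (∀ w w' : G, γφ (w * w') = γφ w * γφ w') := by
  intro γφ hγφ
  rcases Nat.eq_zero_or_pos d with hd | hd
  · -- degenerate case: `1 = 0` in `A`
    subst hd
    have h01 : (0 : A) = 1 := by simpa using hNd.symm
    have : Subsingleton A := subsingleton_of_zero_eq_one h01
    constructor
    · intro w
      have : γφ w = 1 := Subsingleton.elim _ _
      rw [this]; exact isUnit_one
    · intro w w'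
      exact Subsingleton.elim _ _
  -- main case
  -- basic χ facts
  have hχ1 : χ 1 = 0 := by have := hχ 1 1; simp only [one_mul] at this; omega
  have hi : ∀ w : G, χ (φ ^ (-(χ w)) * w) = 0 := by
    intro w
    rw [hχ, chi_zpow χ hχ, hφ]; ring
  -- the conjugation relation for inverses
  have hrel' : ∀ w : G, (((γ w)⁻¹ : Aˣ) : A) * N * (γ w : A) = (q ^ (χ w) : F) • N := by
    intro w
    have := hrel w⁻¹
    rw [map_inv, chi_inv χ hχ, inv_inv, neg_neg] at this
    exact this
  constructor
  · intro w
    rw [hγφ]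
    refine (Units.isUnit (γ w)).mul ?_
    refine ⟨⟨expSum F d ((-(t (φ ^ (-(χ w)) * w))) • N), expSum F d ((t (φ ^ (-(χ w)) * w)) • N), ?_, ?_⟩, rfl⟩
    · rw [expSum_smul_mul d N hNd, neg_add_cancel, expSum_zero_smul d hd]
    · rw [expSum_smul_mul d N hNd, add_neg_cancel, expSum_zero_smul d hd]
  · intro w w'
    rw [hγφ]
    simp only
    set a : F := -(t (φ ^ (-(χ w)) * w)) with ha
    set b : F := -(t (φ ^ (-(χ w')) * w')) with hb
    -- conjugate expSum (a • N) by (γ w')⁻¹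
    have hconjN : (((γ w')⁻¹ : Aˣ) : A) * (a • N) * (γ w' : A) = (a * q ^ (χ w')) • N := by
      rw [mul_smul_comm, smul_mul_assoc, hrel' w', smul_smul, mul_comm]
    have hconjE : (((γ w')⁻¹ : Aˣ) : A) * expSum F d (a • N) * (γ w' : A)
        = expSum F d ((a * q ^ (χ w')) • N) := by
      have := expSum_conj (F := F) d ((γ w')⁻¹) (a • N)
      rw [inv_inv] at this
      rw [this, hconjN]
    -- group identity
    have hgrp : φ ^ (-(χ (w * w'))) * (w * w')
        = (φ ^ (-(χ w')) * (φ ^ (-(χ w)) * w) * (φ ^ (-(χ w')))⁻¹) * (φ ^ (-(χ w')) * w') := by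
      rw [hχ]
      group
    -- t computation
    have hu : χ (φ ^ (-(χ w'))) = -(χ w') := by
      rw [chi_zpow χ hχ, hφ]; ring
    have htww' : t (φ ^ (-(χ (w * w'))) * (w * w'))
        = q ^ (χ w') * t (φ ^ (-(χ w)) * w) + t (φ ^ (-(χ w')) * w') := by
      rw [hgrp, ht _ _ ?_ (hi w')]
      · rw [htconj _ _ (hi w), hu, neg_neg]
      · rw [hχ, hχ, chi_inv χ hχ, hi w, hu]; ring
    have hcoef : -(t (φ ^ (-(χ (w * w'))) * (w * w'))) = a * q ^ (χ w') + b := by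
      rw [htww', ha, hb]; ring
    have key : expSum F d (a • N) * (γ w' : A)
        = (γ w' : A) * expSum F d ((a * q ^ (χ w')) • N) := by
      calc expSum F d (a • N) * (γ w' : A)
          = ((γ w' : A) * (((γ w')⁻¹ : Aˣ) : A)) * expSum F d (a • N) * (γ w' : A) := by
            rw [Units.mul_inv, one_mul]
        _ = (γ w' : A) * ((((γ w')⁻¹ : Aˣ) : A) * expSum F d (a • N) * (γ w' : A)) := by
            simp only [mul_assoc]
        _ = (γ w' : A) * expSum F d ((a * q ^ (χ w')) • N) := by rw [hconjE]
    rw [hcoef, ← expSum_smul_mul d N hNd, map_mul, Units.val_mul]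
    simp only [mul_assoc]
    congr 1
    rw [← mul_assoc, ← key, mul_assoc]
end

section
/- Let 𝒜 be an abelian category and (J^{p,•})_{p≥0} a complex homotopically simplicial object: a family of ℤ-graded objects with morphisms d(α) : J^{s(α),•} → J^{b(α),•}[1−|α|] indexed by injective monotone maps α : [0,s(α)] → [0,b(α)], satisfying Σ_{α=βγ} d(β)d(γ) = 0 for every α. Assume each J^{p,q} vanishes for q below a uniform bound. Then the total object s(J)^n := ⊕_{p+q=n} J^{p,q} with differential d^n := Σ d(α) restricted appropriately is a complex, i.e. d^{n+1} ∘ d^n = 0. -/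
open CategoryTheory CategoryTheory.Limits

attribute [local instance] Classical.propDecidable

/-- Arrows of the simplicial category: strictly monotone (injective monotone) maps
`[0, a-1] → [0, a'-1]`, encoded as strictly monotone maps `Fin a → Fin a'`. -/
abbrev SimplexArr (a a' : ℕ) : Type := {f : Fin a → Fin a' // StrictMono f}

noncomputable instance (a a' : ℕ) : Fintype (SimplexArr a a') := Subtype.fintype _

/-- The total object `s(J)^n = ⊕_{p+q=n} J^{p,q}` of a homotopically simplicial complex
whose rows vanish in degrees `< q₀` (so only `p ≤ n - q₀` contributes). -/
noncomputable def totalObj {𝒜 : Type*} [Category 𝒜] [Preadditive 𝒜]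
    [Limits.HasFiniteBiproducts 𝒜] (J : ℕ → ℤ → 𝒜) (q₀ n : ℤ) : 𝒜 :=
  ⨁ fun p : Fin ((n - q₀).toNat + 1) => J p (n - ((p : ℕ) : ℤ))

/-- The total differential `d^n = Σ_α d(α)` of a homotopically simplicial complex. -/
noncomputable def totalD {𝒜 : Type*} [Category 𝒜] [Preadditive 𝒜]
    [Limits.HasFiniteBiproducts 𝒜] (J : ℕ → ℤ → 𝒜)
    (d : ∀ p p' : ℕ, SimplexArr (p + 1) (p' + 1) → ∀ q : ℤ,
      (J p q ⟶ J p' (q + 1 - ((p' : ℤ) - (p : ℤ)))))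
    (q₀ n : ℤ) : totalObj J q₀ n ⟶ totalObj J q₀ (n + 1) :=
  biproduct.matrix fun p p' =>
    (∑ α : SimplexArr ((p : ℕ) + 1) ((p' : ℕ) + 1), d p p' α (n - ((p : ℕ) : ℤ))) ≫
      eqToHom (congrArg (J (p' : ℕ)) (by ring))

/-! The `(p, p'')` entry of `d^{n+1} ∘ d^n` is a sum over intermediate levels `m` of
`Σ d(β) d(γ)` over all composable pairs `p → m → p''`. Grouping the pairs by their composite
`α = βγ`, the levels `m ∈ [p, p'']` contribute `Σ_α Σ_{α = βγ} d(β) d(γ) = 0`. No strictly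
monotone maps exist across levels outside `[p, p'']`, and the one level `m = p''` that the
truncation of `s(J)^{n+1}` may cut off passes through a row in degree `< q₀`, which vanishes. -/

lemma SimplexArr.isEmpty_of_lt {a a' : ℕ} (h : a' < a) : IsEmpty (SimplexArr a a') :=
  ⟨fun f => absurd (Fintype.card_le_of_injective f.1 f.2.injective) (by simpa using h)⟩

section

variable {𝒜 : Type*} [Category 𝒜] [Preadditive 𝒜] (J : ℕ → ℤ → 𝒜)
  (d : ∀ p p' : ℕ, SimplexArr (p + 1) (p' + 1) → ∀ q : ℤ,
    (J p q ⟶ J p' (q + 1 - ((p' : ℤ) - (p : ℤ)))))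

noncomputable def composableSum (p p'' m : ℕ) (q : ℤ) :
    J p q ⟶ J p'' (q + 2 - ((p'' : ℤ) - (p : ℤ))) :=
  ∑ fg : SimplexArr (p + 1) (m + 1) × SimplexArr (m + 1) (p'' + 1),
    d p m fg.1 q ≫ d m p'' fg.2 (q + 1 - ((m : ℤ) - (p : ℤ))) ≫ eqToHom (by ring_nf)

noncomputable def factorizationSum (p p'' m : ℕ) (γ : SimplexArr (p + 1) (p'' + 1)) (q : ℤ) :
    J p q ⟶ J p'' (q + 2 - ((p'' : ℤ) - (p : ℤ))) :=
  ∑ fg : {x : SimplexArr (p + 1) (m + 1) × SimplexArr (m + 1) (p'' + 1) // x.2.1 ∘ x.1.1 = γ.1},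
    d p m fg.1.1 q ≫ d m p'' fg.1.2 (q + 1 - ((m : ℤ) - (p : ℤ))) ≫ eqToHom (by ring_nf)

lemma composableSum_eq_sum_factorizationSum (p p'' m : ℕ) (q : ℤ) :
    composableSum J d p p'' m q = ∑ γ, factorizationSum J d p p'' m γ q := by
  rw [composableSum, ← Fintype.sum_fiberwise fun fg : SimplexArr (p + 1) (m + 1) × _ =>
    (⟨fg.2.1 ∘ fg.1.1, fg.2.2.comp fg.1.2⟩ : SimplexArr (p + 1) (p'' + 1))]
  exact Finset.sum_congr rfl fun γ _ =>
    Fintype.sum_equiv (Equiv.subtypeEquivRight fun _ => Subtype.ext_iff) _ _ fun _ => rfl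

lemma sum_Icc_composableSum_eq_zero {p p'' : ℕ} {q : ℤ}
    (hrel : ∀ γ, ∑ m ∈ Finset.Icc p p'', factorizationSum J d p p'' m γ q = 0) :
    ∑ m ∈ Finset.Icc p p'', composableSum J d p p'' m q = 0 := by
  simp only [composableSum_eq_sum_factorizationSum]
  rw [Finset.sum_comm]
  exact Finset.sum_eq_zero fun γ _ => hrel γ

lemma composableSum_eq_zero_of_notMem_Icc {p p'' m : ℕ} (hm : m ∉ Finset.Icc p p'') (q : ℤ) :
    composableSum J d p p'' m q = 0 := by
  rw [Finset.mem_Icc, not_and_or, not_le, not_le] at hm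
  rcases hm with hm | hm <;>
  · have := SimplexArr.isEmpty_of_lt (Nat.succ_lt_succ hm)
    simp [composableSum]

lemma composableSum_eq_zero_of_isZero {p p'' m : ℕ} {q : ℤ}
    (hm : IsZero (J m (q + 1 - ((m : ℤ) - (p : ℤ))))) : composableSum J d p p'' m q = 0 :=
  Finset.sum_eq_zero fun fg _ => by rw [hm.eq_zero_of_src (d m p'' fg.2 _), zero_comp, comp_zero]

lemma sum_d_comp_eqToHom_comp_sum_d {p m p'' : ℕ} {q q' : ℤ} (h : q + 1 - ((m : ℤ) - p) = q') :
    (∑ α, d p m α q) ≫ eqToHom (congrArg (J m) h) ≫ ∑ β, d m p'' β q' =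
      composableSum J d p p'' m q ≫ eqToHom (by rw [← h]; ring_nf) := by
  subst h
  simp [composableSum, Preadditive.sum_comp, Preadditive.comp_sum, Fintype.sum_prod_type,
    Finset.sum_comm (γ := SimplexArr (m + 1) (p'' + 1))]

lemma ι_totalD_comp_totalD_π [HasFiniteBiproducts 𝒜] (q₀ n : ℤ) (p : Fin ((n - q₀).toNat + 1))
    (p'' : Fin ((n + 1 + 1 - q₀).toNat + 1)) :
    biproduct.ι (fun p : Fin ((n - q₀).toNat + 1) => J p (n - ((p : ℕ) : ℤ))) p ≫
        (totalD J d q₀ n ≫ totalD J d q₀ (n + 1)) ≫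
        biproduct.π
          (fun p : Fin ((n + 1 + 1 - q₀).toNat + 1) => J p (n + 1 + 1 - ((p : ℕ) : ℤ))) p'' =
      (∑ m : Fin ((n + 1 - q₀).toNat + 1), composableSum J d p p'' m (n - p)) ≫
        eqToHom (by ring_nf) := by
  dsimp only [totalD, totalObj]
  simp only [biproduct.matrix_π, biproduct.matrix_desc, biproduct.ι_desc, Category.assoc]
  rw [Preadditive.sum_comp]
  refine Finset.sum_congr rfl fun m _ => ?_
  rw [reassoc_of% sum_d_comp_eqToHom_comp_sum_d J d (by ring), eqToHom_trans]

end

/-- For a homotopically simplicial complex `(J^{p,•}, d(α))` in a preadditive category,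
uniformly bounded below (rows vanish in degrees `< q₀`) and satisfying the relations
`Σ_{α=βγ} d(β) d(γ) = 0`, the total differential squares to zero: `s(J)` is a complex. -/
theorem stmt18 {𝒜 : Type*} [Category 𝒜] [Preadditive 𝒜] [Limits.HasFiniteBiproducts 𝒜]
    (J : ℕ → ℤ → 𝒜)
    (d : ∀ p p' : ℕ, SimplexArr (p + 1) (p' + 1) → ∀ q : ℤ,
      (J p q ⟶ J p' (q + 1 - ((p' : ℤ) - (p : ℤ)))))
    (q₀ : ℤ) (hbound : ∀ (p : ℕ) (q : ℤ), q < q₀ → Limits.IsZero (J p q))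
    (hrel : ∀ (p p' : ℕ) (α : SimplexArr (p + 1) (p' + 1)) (q : ℤ),
      (∑ m ∈ Finset.Icc p p',
        ∑ fg : {x : SimplexArr (p + 1) (m + 1) × SimplexArr (m + 1) (p' + 1) //
            x.2.1 ∘ x.1.1 = α.1},
          d p m fg.1.1 q ≫ d m p' fg.1.2 (q + 1 - ((m : ℤ) - (p : ℤ))) ≫
            eqToHom (congrArg (J p')
              (by ring :
                (q + 1 - ((m : ℤ) - (p : ℤ))) + 1 - ((p' : ℤ) - (m : ℤ)) =
                  q + 2 - ((p' : ℤ) - (p : ℤ))))) = 0) :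
    ∀ n : ℤ, totalD J d q₀ n ≫ totalD J d q₀ (n + 1) = 0 := by
  intro n
  refine biproduct.hom_ext' _ _ fun p => biproduct.hom_ext _ _ fun p'' => ?_
  refine ((Category.assoc _ _ _).trans (ι_totalD_comp_totalD_π J d q₀ n p p'')).trans ?_
  suffices ∑ m ∈ Finset.range ((n + 1 - q₀).toNat + 1), composableSum J d p p'' m (n - p) = 0 by
    rw [Fin.sum_univ_eq_sum_range (fun m => composableSum J d p p'' m (n - p)), this, zero_comp]
    exact ((congrArg (· ≫ _) comp_zero).trans zero_comp).symm
  have hIcc : Function.support (fun m => composableSum J d p p'' m (n - p)) ⊆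
      Finset.Icc (p : ℕ) (p'' : ℕ) :=
    fun m hm => by_contra fun h => hm (composableSum_eq_zero_of_notMem_Icc J d h _)
  have hrange : Function.support (fun m => composableSum J d p p'' m (n - p)) ⊆
      Finset.range ((n + 1 - q₀).toNat + 1) := fun m hm => by_contra fun h => hm <|
    composableSum_eq_zero_of_isZero J d <| hbound m _ <| by
      have := Int.self_le_toNat (n + 1 - q₀)
      simp only [Finset.coe_range, Set.mem_Iio, not_lt] at h
      omega
  rw [← finsum_eq_sum_of_support_subset _ hrange, finsum_eq_sum_of_support_subset _ hIcc]
  exact sum_Icc_composableSum_eq_zero J d fun γ => hrel p p'' γ _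
end
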